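/- arXiv:2105.11923 — 5 statements merged into one kernel-verified Lean document; each statement's English description precedes it below -/
import Mathlib

section
/- Let E_1 = (C, V_1) and E_2 = (C, V_2) be two elections over the same candidate set C with the same number n of voters, with voter v_i of V_1 matched to voter u_i of V_2 for each i. Define a graph G on vertex set C where {x, y} is an edge if and only if for every i, voter v_i ranks x above y exactly when u_i ranks x above y. Then for any subset K ⊆ C, the restrictions of v_i and u_i to K are identical linear orders for every i if and only if K is a clique in G. -/
/-- Given two elections over the same candidate set `C` with matched voters `v i` and `u i`,
and the graph `G` on `C` whose edges are the pairs of distinct candidates on which all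
matched voter pairs agree, a subset `K ⊆ C` has identical restrictions of all matched
votes if and only if `K` is a clique in `G`. -/
theorem restriction_identical_iff_clique {C : Type*} [Fintype C] {n : ℕ}
    (v u : Fin n → C → C → Prop)
    (hv : ∀ i, IsStrictTotalOrder C (v i)) (hu : ∀ i, IsStrictTotalOrder C (u i))
    (G : SimpleGraph C)
    (hG : ∀ x y, G.Adj x y ↔ x ≠ y ∧ ∀ i, (v i x y ↔ u i x y)) :
    ∀ K : Set C,
      (∀ i, ∀ x ∈ K, ∀ y ∈ K, (v i x y ↔ u i x y)) ↔ G.IsClique K := by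
  intro K
  constructor
  · intro h x hx y hy hxy
    exact (hG x y).mpr ⟨hxy, fun i => h i x hx y hy⟩
  · intro h i x hx y hy
    by_cases hxy : x = y
    · subst hxy
      constructor
      · intro hv'; exact absurd hv' ((hv i).toIsStrictOrder.toIrrefl.irrefl x)
      · intro hu'; exact absurd hu' ((hu i).toIsStrictOrder.toIrrefl.irrefl x)
    · exact ((hG x y).mp (h hx hy hxy)).2 i
end

section
/- Let G be a finite simple graph and fix a linear order ⊴ on V(G). For each vertex x, let M(x) be the set of non-neighbors of x (excluding x) and N(x) the set of neighbors of x. Define votes v¹_x : M(x) ≻ x ≻ N(x) and v²_x : x ≻ M(x) ≻ N(x), where candidates inside M(x) and N(x) are listed according to ⊴. Then for any subset K ⊆ V(G), the restriction of v¹_x to K equals the restriction of v²_x to K for every x ∈ V(G) if and only if K is a clique in G. -/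
/-- `nonNbrs G x` is `M(x)`: the set of non-neighbors of `x` in `G`, excluding `x`. -/
def nonNbrs {V : Type*} (G : SimpleGraph V) (x : V) : Set V :=
  {y | y ≠ x ∧ ¬ G.Adj x y}

/-- Level of candidate `c` in the vote `v¹_x : M(x) ≻ x ≻ N(x)`. -/
def lvlA {V : Type*} [DecidableEq V] (G : SimpleGraph V) [DecidableRel G.Adj]
    (x c : V) : ℕ :=
  if c ≠ x ∧ ¬ G.Adj x c then 0 else if c = x then 1 else 2

/-- Level of candidate `c` in the vote `v²_x : x ≻ M(x) ≻ N(x)`. -/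
def lvlB {V : Type*} [DecidableEq V] (G : SimpleGraph V) [DecidableRel G.Adj]
    (x c : V) : ℕ :=
  if c = x then 0 else if ¬ G.Adj x c then 1 else 2

/-- The vote `v¹_x : M(x) ≻ x ≻ N(x)` (blocks listed in the fixed linear order):
`voteA G x a b` means `a` is ranked above `b`. -/
def voteA {V : Type*} [LinearOrder V] (G : SimpleGraph V) [DecidableRel G.Adj]
    (x a b : V) : Prop :=
  lvlA G x a < lvlA G x b ∨ (lvlA G x a = lvlA G x b ∧ a < b)

/-- The vote `v²_x : x ≻ M(x) ≻ N(x)`. -/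
def voteB {V : Type*} [LinearOrder V] (G : SimpleGraph V) [DecidableRel G.Adj]
    (x a b : V) : Prop :=
  lvlB G x a < lvlB G x b ∨ (lvlB G x a = lvlB G x b ∧ a < b)

/-- For any `K ⊆ V(G)`, the restrictions of `v¹_x` and `v²_x` to `K` coincide for every
vertex `x` if and only if `K` is a clique in `G`. -/
theorem restrictions_equal_iff_clique {V : Type*} [Fintype V] [LinearOrder V]
    (G : SimpleGraph V) [DecidableRel G.Adj] :
    ∀ K : Set V,
      (∀ x : V, ∀ a ∈ K, ∀ b ∈ K, (voteA G x a b ↔ voteB G x a b)) ↔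
        G.IsClique K := by
  intro K
  constructor
  · intro h a ha b hb hab
    by_contra hadj
    have hiff := h a a ha b hb
    have hba : b ≠ a := fun e => hab e.symm
    simp [voteA, voteB, lvlA, lvlB, hba, hadj] at hiff
  · intro hK x a ha b hb
    rcases eq_or_ne a b with rfl | hab
    · simp [voteA, voteB]
    have hadj : G.Adj a b := hK ha hb hab
    have hx1 : a = x → G.Adj x b := fun e => e ▸ hadj
    have hx2 : b = x → G.Adj x a := fun e => e ▸ hadj.symm
    unfold voteA voteB lvlA lvlB
    split_ifs <;> simp_all
end

section
/- Let G be a finite simple graph with at least k vertices and at least C(k,2) edges, and let K_k be the complete graph on k vertices. Construct election E_H for a graph H as follows: the candidate set is V(H) ∪ {α_H, β_H} for two fresh candidates, and for each edge e = {x, y} of H there are four voters with preference orders x ≻ y ≻ α_H ≻ β_H ≻ rest, x ≻ y ≻ β_H ≻ α_H ≻ rest, y ≻ x ≻ α_H ≻ β_H ≻ rest, and y ≻ x ≻ β_H ≻ α_H ≻ rest (where 'rest' lists V(H) \ {x, y} in a fixed global order). Then G contains a clique of size k if and only if E_{K_k} is isomorphic to a subelection of E_G. -/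
/-- Candidates of the election `E_H` built from a graph with vertex type `α`:
the vertices (`Sum.inl`) plus the two special candidates `α_H = Sum.inr false`
and `β_H = Sum.inr true`. -/
def GCand (α : Type*) := α ⊕ Bool

/-- Level of a candidate in the vote associated with the ordered pair `(x, y)`
and flag `s` (the special candidate `Sum.inr s` is ranked third, the other fourth):
`x ≻ y ≻ (inr s) ≻ (inr ¬s) ≻ rest`. -/
def glvl {α : Type*} [DecidableEq α] (x y : α) (s : Bool) : GCand α → ℕ
  | .inl z => if z = x then 0 else if z = y then 1 else 4
  | .inr b => if b = s then 2 else 3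

/-- The vote of `E_H` for the ordered pair `(x, y)` and flag `s`:
`a` is ranked above `b` iff its level is smaller, ties (possible only in the
"rest" block of vertex candidates) broken by the fixed global linear order. -/
def gvote {α : Type*} [LinearOrder α] (x y : α) (s : Bool) (a b : GCand α) : Prop :=
  glvl x y s a < glvl x y s b ∨
    (glvl x y s a = glvl x y s b ∧ ∃ za zb : α, a = Sum.inl za ∧ b = Sum.inl zb ∧ za < zb)

/-- Voter index set of `E_H` for a graph `H`: for each edge `{x,y}` the four voters
correspond to the two ordered pairs `(x,y)`, `(y,x)` combined with the two flags. -/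
def GVoters {α : Type*} (H : SimpleGraph α) := {p : α × α // H.Adj p.1 p.2} × Bool



section aux
variable {α : Type*} [LinearOrder α]

lemma gvote_inr_inr {x y : α} {s a b : Bool} :
    gvote x y s (Sum.inr a) (Sum.inr b) ↔ a = s ∧ b ≠ s := by
  cases a <;> cases b <;> cases s <;> simp [gvote, glvl]

lemma gvote_inl_inr {x y z : α} {s b : Bool} :
    gvote x y s (Sum.inl z) (Sum.inr b) ↔ (z = x ∨ z = y) := by
  simp only [gvote, glvl]
  constructor
  · rintro (h | ⟨-, za, zb, -, h, -⟩)
    · split_ifs at h <;> simp_all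
    · cases h
  · rintro (rfl | rfl) <;> left <;> split_ifs <;> simp_all

lemma gvote_inr_inl {x y z : α} {s b : Bool} :
    gvote x y s (Sum.inr b) (Sum.inl z) ↔ (z ≠ x ∧ z ≠ y) := by
  simp only [gvote, glvl]
  constructor
  · rintro (h | ⟨-, za, zb, h, -, -⟩)
    · split_ifs at h <;> simp_all
    · cases h
  · rintro ⟨h1, h2⟩
    left
    split_ifs <;> simp_all

lemma gvote_inl_inl {x y : α} (hxy : x ≠ y) {s : Bool} {u v : α} :
    gvote x y s (Sum.inl u) (Sum.inl v) ↔
      (u = x ∧ v ≠ x) ∨ (u = y ∧ v ≠ x ∧ v ≠ y) ∨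
        (u ≠ x ∧ u ≠ y ∧ v ≠ x ∧ v ≠ y ∧ u < v) := by
  simp only [gvote, glvl]
  constructor
  · rintro (h | ⟨he, za, zb, hza, hzb, hlt⟩)
    · split_ifs at h <;> simp_all
    · obtain rfl : u = za := Sum.inl.inj hza
      obtain rfl : v = zb := Sum.inl.inj hzb
      split_ifs at he <;> simp_all
  · rintro (⟨rfl, hv⟩ | ⟨rfl, hv1, hv2⟩ | ⟨h1, h2, h3, h4, hlt⟩)
    · left; split_ifs <;> simp_all
    · left; split_ifs <;> simp_all
    · right
      refine ⟨?_, u, v, rfl, rfl, hlt⟩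
      split_ifs <;> simp_all

lemma chain3 {x y : α} (hxy : x ≠ y) {X Y : GCand α} {a : α} {s : Bool}
    (hXY : gvote x y s X Y) (hYA : gvote x y s Y (Sum.inl a)) : a ≠ x ∧ a ≠ y := by
  constructor
  · rintro rfl
    rcases Y with z | b
    · rcases (gvote_inl_inl hxy).1 hYA with h | h | h <;> tauto
    · exact (gvote_inr_inl.1 hYA).1 rfl
  · rintro rfl
    rcases Y with z | b
    · rcases (gvote_inl_inl hxy).1 hYA with ⟨rfl, -⟩ | h | h
      · rcases X with w | b
        · rcases (gvote_inl_inl hxy).1 hXY with h | h | h <;> tauto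
        · exact (gvote_inr_inl.1 hXY).1 rfl
      · tauto
      · tauto
    · exact (gvote_inr_inl.1 hYA).2 rfl

lemma gkey {x0 y0 x1 y1 : α} (h0 : x0 ≠ y0) (h1 : x1 ≠ y1) {r0 r1 : Bool}
    {X Y A B : GCand α}
    (hXY0 : gvote x0 y0 r0 X Y) (hYA0 : gvote x0 y0 r0 Y A)
    (hYB0 : gvote x0 y0 r0 Y B) (hAB0 : gvote x0 y0 r0 A B)
    (hXY1 : gvote x1 y1 r1 X Y) (hYA1 : gvote x1 y1 r1 Y A)
    (hYB1 : gvote x1 y1 r1 Y B) (hBA1 : gvote x1 y1 r1 B A) :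
    X = Sum.inl x0 ∧ Y = Sum.inl y0 := by
  rcases A with a | a <;> rcases B with b | b
  · -- both inl : contradiction
    have ha := chain3 h0 hXY0 hYA0
    have hb := chain3 h1 hXY1 hYB1
    rcases (gvote_inl_inl h0).1 hAB0 with h | h | h
    · exact absurd h.1 ha.1
    · exact absurd h.1 ha.2
    · rcases (gvote_inl_inl h1).1 hBA1 with h' | h' | h'
      · exact absurd h'.1 hb.1
      · exact absurd h'.1 hb.2
      · exact absurd h'.2.2.2.2 (asymm h.2.2.2.2)
  · have ha := chain3 h0 hXY0 hYA0
    rcases gvote_inl_inr.1 hAB0 with h | h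
    · exact absurd h ha.1
    · exact absurd h ha.2
  · have hb := chain3 h1 hXY1 hYB1
    rcases gvote_inl_inr.1 hBA1 with h | h
    · exact absurd h hb.1
    · exact absurd h hb.2
  · rcases Y with q | bq
    · rcases X with p | bp
      · have hq := gvote_inl_inr.1 hYA0
        rcases (gvote_inl_inl h0).1 hXY0 with h | h | h
        · refine ⟨by rw [h.1], ?_⟩
          rcases hq with h' | h'
          · exact absurd h' h.2
          · rw [h']
        · rcases hq with h' | h'
          · exact absurd h' h.2.1
          · exact absurd h' h.2.2
        · rcases hq with h' | h'
          · exact absurd h' h.2.2.1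
          · exact absurd h' h.2.2.2.1
      · rcases gvote_inl_inr.1 hYA0 with h' | h'
        · exact absurd h' (gvote_inr_inl.1 hXY0).1
        · exact absurd h' (gvote_inr_inl.1 hXY0).2
    · exact absurd (gvote_inr_inr.1 hAB0).1 (gvote_inr_inr.1 hYA0).2

lemma glvl_map {β : Type*} [LinearOrder β] (f : β ↪o α) (x y : β) (s : Bool) (c : GCand β) :
    glvl (f x) (f y) s (Sum.map f id c : α ⊕ Bool) = glvl x y s c := by
  rcases c with z | b <;> simp [glvl, Sum.map, f.injective.eq_iff]

lemma gvote_map {β : Type*} [LinearOrder β] (f : β ↪o α) (x y : β) (s : Bool) (a b : GCand β) :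
    gvote x y s a b ↔ gvote (f x) (f y) s (Sum.map f id a : α ⊕ Bool) (Sum.map f id b : α ⊕ Bool) := by
  unfold gvote
  rw [glvl_map, glvl_map]
  constructor
  · rintro (h | ⟨he, za, zb, rfl, rfl, hlt⟩)
    · exact Or.inl h
    · exact Or.inr ⟨he, f za, f zb, rfl, rfl, f.lt_iff_lt.2 hlt⟩
  · rintro (h | ⟨he, za, zb, ha, hb, hlt⟩)
    · exact Or.inl h
    · rcases a with za' | ba
      · rcases b with zb' | bb
        · refine Or.inr ⟨he, za', zb', rfl, rfl, ?_⟩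
          have hza : f za' = za := Sum.inl.inj ha
          have hzb : f zb' = zb := Sum.inl.inj hb
          exact f.lt_iff_lt.1 (by rw [hza, hzb]; exact hlt)
        · exact absurd hb (by simp [Sum.map])
      · exact absurd ha (by simp [Sum.map])

end aux

/-- Theorem 3.2 correctness: `G` (with at least `k` vertices and at least `C(k,2)` edges)
has a clique of size `k` iff `E_{K_k}` is isomorphic to a subelection of `E_G`,
i.e. there are injections of the candidates and of the voters of `E_{K_k}` into those of
`E_G` under which every vote of `E_{K_k}` is the restriction of the corresponding vote
of `E_G`. -/
theorem clique_iff_subelection_isomorphism {α : Type*} [Fintype α] [LinearOrder α]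
    (G : SimpleGraph α) (k : ℕ)
    (hv : k ≤ Fintype.card α) (he : Nat.choose k 2 ≤ Nat.card G.edgeSet) :
    (∃ K : Finset α, K.card = k ∧ G.IsClique (K : Set α)) ↔
      (∃ (σ : GCand (Fin k) → GCand α)
         (ι : GVoters ((⊤ : SimpleGraph (Fin k))) → GVoters G),
        Function.Injective σ ∧ Function.Injective ι ∧
          ∀ (i : GVoters ((⊤ : SimpleGraph (Fin k)))) (a b : GCand (Fin k)),
            gvote i.1.1.1 i.1.1.2 i.2 a b ↔
              gvote (ι i).1.1.1 (ι i).1.1.2 (ι i).2 (σ a) (σ b)) := by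
  constructor
  · rintro ⟨K, hK, hKcl⟩
    let f : Fin k ↪o α := K.orderEmbOfFin hK
    have hfK : ∀ i, f i ∈ K := fun i => K.orderEmbOfFin_mem hK i
    have hadj : ∀ i : GVoters (⊤ : SimpleGraph (Fin k)), G.Adj (f i.1.1.1) (f i.1.1.2) := by
      intro i
      have hne : i.1.1.1 ≠ i.1.1.2 := i.1.2.ne
      exact hKcl (hfK _) (hfK _) (f.injective.ne hne)
    refine ⟨Sum.map f id, fun i => ⟨⟨(f i.1.1.1, f i.1.1.2), hadj i⟩, i.2⟩,
      f.injective.sumMap Function.injective_id, ?_, ?_⟩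
    · rintro ⟨⟨⟨a1, a2⟩, ha⟩, sa⟩ ⟨⟨⟨b1, b2⟩, hb⟩, sb⟩ hab
      have h1 : f a1 = f b1 := congrArg (fun v : GVoters G => v.1.1.1) hab
      have h2 : f a2 = f b2 := congrArg (fun v : GVoters G => v.1.1.2) hab
      have h3 : sa = sb := congrArg (fun v : GVoters G => v.2) hab
      obtain rfl : a1 = b1 := f.injective h1
      obtain rfl : a2 = b2 := f.injective h2
      obtain rfl : sa = sb := h3
      rfl
    · intro i a b
      exact gvote_map f i.1.1.1 i.1.1.2 i.2 a b
  · rintro ⟨σ, ι, hσ, hι, hpres⟩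
    rcases le_or_gt k 1 with hk | hk
    · obtain ⟨K, -, hKcard⟩ := Finset.exists_subset_card_eq (by simpa using hv :
        k ≤ (Finset.univ : Finset α).card)
      refine ⟨K, hKcard, ?_⟩
      intro u hu v hv' huv
      exact absurd (Finset.card_le_one.1 (hKcard ▸ hk) u hu v hv') huv
    · have hkey : ∀ x y : Fin k, x ≠ y →
          ∃ p q : α, σ (Sum.inl x) = Sum.inl p ∧ σ (Sum.inl y) = Sum.inl q ∧ G.Adj p q := by
        intro x y hxy
        have hadj : (⊤ : SimpleGraph (Fin k)).Adj x y := by simpa using hxy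
        let i0 : GVoters (⊤ : SimpleGraph (Fin k)) := (⟨(x, y), hadj⟩, false)
        let i1 : GVoters (⊤ : SimpleGraph (Fin k)) := (⟨(x, y), hadj⟩, true)
        have H0 : ∀ a b : GCand (Fin k), gvote x y false a b →
            gvote (ι i0).1.1.1 (ι i0).1.1.2 (ι i0).2 (σ a) (σ b) :=
          fun a b h => (hpres i0 a b).1 h
        have H1 : ∀ a b : GCand (Fin k), gvote x y true a b →
            gvote (ι i1).1.1.1 (ι i1).1.1.2 (ι i1).2 (σ a) (σ b) :=
          fun a b h => (hpres i1 a b).1 h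
        have sXY : ∀ s, gvote x y s (Sum.inl x) (Sum.inl y) :=
          fun s => (gvote_inl_inl hxy).2 (Or.inl ⟨rfl, Ne.symm hxy⟩)
        have sYB : ∀ s b, gvote x y s (Sum.inl y) (Sum.inr b) :=
          fun s b => gvote_inl_inr.2 (Or.inr rfl)
        have sAB : gvote x y false (Sum.inr false) (Sum.inr true) :=
          gvote_inr_inr.2 ⟨rfl, by simp⟩
        have sBA : gvote x y true (Sum.inr true) (Sum.inr false) :=
          gvote_inr_inr.2 ⟨rfl, by simp⟩
        have h0 : (ι i0).1.1.1 ≠ (ι i0).1.1.2 := (ι i0).1.2.ne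
        have h1 : (ι i1).1.1.1 ≠ (ι i1).1.1.2 := (ι i1).1.2.ne
        obtain ⟨hX, hY⟩ := gkey h0 h1
          (H0 _ _ (sXY false)) (H0 _ _ (sYB false false)) (H0 _ _ (sYB false true))
          (H0 _ _ sAB)
          (H1 _ _ (sXY true)) (H1 _ _ (sYB true false)) (H1 _ _ (sYB true true))
          (H1 _ _ sBA)
        exact ⟨_, _, hX, hY, (ι i0).1.2⟩
      have hex : ∀ z : Fin k, ∃ p : α, σ (Sum.inl z) = Sum.inl p := by
        intro z
        obtain ⟨y, hy⟩ := Fintype.exists_ne_of_one_lt_card (by simpa using hk) z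
        obtain ⟨p, q, h1, -, -⟩ := hkey z y (Ne.symm hy)
        exact ⟨p, h1⟩
      choose φ hφ using hex
      have hφinj : Function.Injective φ := by
        intro a b hab
        have : σ (Sum.inl a) = σ (Sum.inl b) := by rw [hφ, hφ, hab]
        exact Sum.inl.inj (hσ this)
      refine ⟨Finset.image φ Finset.univ, ?_, ?_⟩
      · rw [Finset.card_image_of_injective _ hφinj, Finset.card_univ, Fintype.card_fin]
      · intro u hu v hv' huv
        simp only [Finset.coe_image, Set.mem_image, Finset.mem_coe] at hu hv'
        obtain ⟨a, -, rfl⟩ := hu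
        obtain ⟨b, -, rfl⟩ := hv'
        have hab : a ≠ b := fun h => huv (by rw [h])
        obtain ⟨p, q, h1, h2, hadj⟩ := hkey a b hab
        have hp : φ a = p := Sum.inl.inj ((hφ a).symm.trans h1)
        have hq : φ b = q := Sum.inl.inj ((hφ b).symm.trans h2)
        rw [hp, hq]
        exact hadj
end

section
/- Let P_1, ..., P_m be pairwise disjoint nonempty finite sets of candidates, each equipped with a fixed internal linear order. Let u be the vote listing P_1, then P_2, ..., then P_m, each block in its internal order; let u' be the vote listing P_1, ..., P_m in the same block order but with each block internally reversed. Then for a subset C' of the candidates, the restrictions of u and u' to C' are equal if and only if |C' ∩ P_i| ≤ 1 for every i ∈ [m]. -/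
/-- Block gadget lemma: candidates carry a block index `blk : C → Fin m` (the blocks
`P_i` are the fibers of `blk`) and a global linear order giving each block its internal
order. The vote `u` lists the blocks `P_1 ≻ ⋯ ≻ P_m`, each in its internal order
(`a` above `b` iff `blk a < blk b`, ties broken by `a < b`); the vote `u'` lists the
blocks in the same order, each internally reversed. For a subset `C'` of candidates,
the restrictions of `u` and `u'` to `C'` are equal iff `C'` meets each block in at most
one candidate, i.e. `blk` is injective on `C'`. -/
theorem block_gadget {C : Type*} [LinearOrder C] {m : ℕ} (blk : C → Fin m)
    (C' : Set C) :
    (∀ a ∈ C', ∀ b ∈ C',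
        ((blk a < blk b ∨ (blk a = blk b ∧ a < b)) ↔
          (blk a < blk b ∨ (blk a = blk b ∧ b < a)))) ↔
      Set.InjOn blk C' := by
  constructor
  · intro h a ha b hb hab
    by_contra hne
    rcases lt_or_gt_of_ne hne with hlt | hgt
    · have := (h a ha b hb).mp (Or.inr ⟨hab, hlt⟩)
      rcases this with h1 | ⟨_, h2⟩
      · exact absurd hab (ne_of_lt h1)
      · exact absurd hlt (not_lt_of_gt h2)
    · have := (h a ha b hb).mpr (Or.inr ⟨hab, hgt⟩)
      rcases this with h1 | ⟨_, h2⟩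
      · exact absurd hab (ne_of_lt h1)
      · exact absurd hgt (not_lt_of_gt h2)
  · intro h a ha b hb
    constructor
    · rintro (h1 | ⟨h1, h2⟩)
      · exact Or.inl h1
      · exact absurd (h ha hb h1) (ne_of_lt h2)
    · rintro (h1 | ⟨h1, h2⟩)
      · exact Or.inl h1
      · exact absurd (h ha hb h1) (ne_of_gt h2)
end

section
/- Let X be a set of m elements and S a family of 3-element subsets of X. Construct elections E_1 (over candidate set X) and E_2 (over candidates s_{i,t} for each element x_i belonging to set S_t) with matched voter pairs as in the X3C reduction: a pair (v, v') both ranking X in index order, matched to (u, u') ranking blocks P_1 ≻ ... ≻ P_m with blocks respectively in forward and reversed internal order; and for each S_t = {x_i, x_j, x_k} with i < j < k, pairs (v_t, v'_t) ranking x_i, x_j, x_k first in forward respectively reversed order, matched to (u_t, u'_t) ranking s_{i,t}, s_{j,t}, s_{k,t} first in forward respectively reversed order followed by the remaining members of P_i, P_j, P_k and the other blocks. Then E_1 is isomorphic, respecting the voter matching, to a candidate subelection of E_2 if and only if S contains an exact cover of X. -/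
/-- Candidates of the election `E₂` in the X3C reduction: one candidate `s_{i,t}`
for each element `x_i` and set `S_t` with `x_i ∈ S_t`.  The block `P_i` consists of
the candidates whose first component is `i`. -/
def X3CCand {m n : ℕ} (S : Fin n → Finset (Fin m)) := {p : Fin m × Fin n // p.1 ∈ S p.2}

/-- Voter index set: the pair `(v, v')` (`Sum.inl false`, `Sum.inl true`) and, for each
set index `t`, the pair `(v_t, v'_t)` (`Sum.inr (t, false)`, `Sum.inr (t, true)`);
the voter with index `j` in `E₁` is matched to the voter with index `j` in `E₂`. -/
def X3CVoters (n : ℕ) := Bool ⊕ (Fin n × Bool)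

/-- Votes of `E₁` (over the elements `Fin m`); `x1Vote j a b` means voter `j` ranks
`a` above `b`.  Voters `v, v'` rank the elements in index order; `v_t` ranks the
members of `S_t` first (in index order) and then the rest in index order, and `v'_t`
does the same with the members of `S_t` internally reversed. -/
def x1Vote {m n : ℕ} (S : Fin n → Finset (Fin m)) : X3CVoters n → Fin m → Fin m → Prop
  | .inl _ => fun a b => a < b
  | .inr (t, false) => fun a b =>
      (a ∈ S t ∧ b ∉ S t) ∨ ((a ∈ S t ↔ b ∈ S t) ∧ a < b)
  | .inr (t, true) => fun a b =>
      (a ∈ S t ∧ b ∉ S t) ∨ (a ∈ S t ∧ b ∈ S t ∧ b < a) ∨ (a ∉ S t ∧ b ∉ S t ∧ a < b)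

/-- Lexicographic comparison of triples of naturals. -/
def tripLt (p q : ℕ × ℕ × ℕ) : Prop :=
  p.1 < q.1 ∨ (p.1 = q.1 ∧ (p.2.1 < q.2.1 ∨ (p.2.1 = q.2.1 ∧ p.2.2 < q.2.2)))

/-- Sort key of candidate `c` in vote `u_t` (`s = false`) or `u'_t` (`s = true`):
candidates `s_{·,t}` come first (ordered by element index, reversed in `u'_t`), then
the remaining members of the blocks of the elements of `S_t` (blocks in element order,
reversed in `u'_t`; internally in set-index order), then the other blocks in order. -/
def x2Key {m n : ℕ} (S : Fin n → Finset (Fin m)) (t : Fin n) (s : Bool)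
    (c : X3CCand S) : ℕ × ℕ × ℕ :=
  (if c.1.2 = t then 0 else if c.1.1 ∈ S t then 1 else 2,
   if (c.1.2 = t ∨ c.1.1 ∈ S t) ∧ s then m - c.1.1.1 else c.1.1.1,
   c.1.2.1)

/-- Votes of `E₂` (over the candidates `s_{i,t}`): `u` lists the blocks
`P_1 ≻ ⋯ ≻ P_m`, each internally in set-index order; `u'` lists them with each block
internally reversed; `u_t` and `u'_t` are given by the keys above. -/
def x2Vote {m n : ℕ} (S : Fin n → Finset (Fin m)) :
    X3CVoters n → X3CCand S → X3CCand S → Prop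
  | .inl false => fun a b => a.1.1 < b.1.1 ∨ (a.1.1 = b.1.1 ∧ a.1.2 < b.1.2)
  | .inl true => fun a b => a.1.1 < b.1.1 ∨ (a.1.1 = b.1.1 ∧ b.1.2 < a.1.2)
  | .inr (t, s) => fun a b => tripLt (x2Key S t s a) (x2Key S t s b)

private lemma fin_strictMono_eq_id {m : ℕ} {f : Fin m → Fin m} (hf : StrictMono f) :
    ∀ a, f a = a := by
  have hsurj : Function.Surjective f := Finite.injective_iff_surjective.mp hf.injective
  have h : f = id := (hf.range_inj strictMono_id).mp (by
    rw [Set.range_eq_univ.mpr hsurj, Set.range_id])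
  intro a; rw [h]; rfl

/-- X3C reduction correctness: `E₁` is isomorphic, respecting the voter matching, to a
candidate subelection of `E₂` iff the family `S` contains an exact cover of the
element set. -/
theorem x3c_reduction_correct {m n : ℕ} (S : Fin n → Finset (Fin m))
    (hS : ∀ t, (S t).card = 3) :
    (∃ σ : Fin m → X3CCand S, Function.Injective σ ∧
        ∀ (j : X3CVoters n) (a b : Fin m),
          x1Vote S j a b ↔ x2Vote S j (σ a) (σ b)) ↔
      (∃ T : Finset (Fin n), ∀ i : Fin m, ∃! t : Fin n, t ∈ T ∧ i ∈ S t) := by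
  constructor
  · rintro ⟨σ, hinj, hvote⟩
    have hmono : StrictMono fun a => (σ a).1.1 := by
      intro a b hab
      have h1 := (hvote (.inl false) a b).mp hab
      have h2 := (hvote (.inl true) a b).mp hab
      simp only [x2Vote] at h1 h2
      rcases h1 with h | ⟨he, ht⟩
      · exact h
      · rcases h2 with h | ⟨_, ht'⟩
        · exact h
        · exact absurd (ht.trans ht') (lt_irrefl _)
    have hid : ∀ a, (σ a).1.1 = a := fin_strictMono_eq_id hmono
    have hmem : ∀ a, a ∈ S ((σ a).1.2) := by
      intro a
      have := (σ a).2
      rwa [hid a] at this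
    have hblock : ∀ t a b, a ∈ S t → b ∈ S t → a < b →
        ((σ a).1.2 = t ↔ (σ b).1.2 = t) := by
      intro t a b ha hb hab
      have h1 := (hvote (.inr (t, false)) a b).mp (Or.inr ⟨iff_of_true ha hb, hab⟩)
      have h2 : ¬ x2Vote S (.inr (t, true)) (σ a) (σ b) := by
        intro h
        have h' := (hvote (.inr (t, true)) a b).mpr h
        simp only [x1Vote] at h'
        rcases h' with ⟨_, h⟩ | ⟨_, _, h⟩ | ⟨h, _⟩
        · exact h hb
        · exact absurd (hab.trans h) (lt_irrefl _)
        · exact h ha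
      by_cases hta : (σ a).1.2 = t <;> by_cases htb : (σ b).1.2 = t
      · simp [hta, htb]
      · exfalso
        apply h2
        simp only [x2Vote, tripLt, x2Key, hid, hta, htb, ha, hb]
        simp
      · exfalso
        simp only [x2Vote, tripLt, x2Key, hid, hta, htb, ha, hb] at h1
        simp at h1
      · simp [hta, htb]
    refine ⟨Finset.image (fun a => (σ a).1.2) Finset.univ, fun i =>
      ⟨(σ i).1.2, ⟨Finset.mem_image_of_mem _ (Finset.mem_univ i), hmem i⟩, ?_⟩⟩
    rintro t ⟨ht, hit⟩
    obtain ⟨j, -, hj⟩ := Finset.mem_image.mp ht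
    have hjS : j ∈ S t := hj ▸ hmem j
    rcases lt_trichotomy i j with h | h | h
    · exact ((hblock t i j hit hjS h).mpr hj).symm
    · subst h; exact hj.symm
    · exact ((hblock t j i hjS hit h).mp hj).symm
  · rintro ⟨T, hT⟩
    choose τ hτ huniq using hT
    have hsame : ∀ t a b, a ∈ S t → b ∈ S t → τ a = t → τ b = t := by
      intro t a b ha hb h
      exact (huniq b t ⟨h ▸ (hτ a).1, hb⟩).symm
    have hnot : ∀ t a, a ∉ S t → τ a ≠ t := by
      intro t a ha h
      exact ha (h ▸ (hτ a).2)
    refine ⟨fun a => ⟨(a, τ a), (hτ a).2⟩, fun a b h => by simpa using congrArg (fun c => c.1.1) h, ?_⟩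
    rintro (b' | ⟨t, s⟩) a b
    · cases b' <;>
      · simp only [x1Vote, x2Vote]
        constructor
        · exact Or.inl
        · rintro (h | ⟨h, h'⟩)
          · exact h
          · exact absurd (h ▸ h') (lt_irrefl _)
    · have hva := a.isLt
      have hvb := b.isLt
      by_cases hab : a = b
      · subst hab
        simp only [x1Vote, x2Vote, tripLt]
        cases s <;> simp
      · have hne : a.1 ≠ b.1 := fun h => hab (Fin.val_injective h)
        by_cases ha : a ∈ S t <;> by_cases hb : b ∈ S t
        · have hpar : τ a = t ↔ τ b = t := ⟨hsame t a b ha hb, hsame t b a hb ha⟩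
          by_cases hta : τ a = t
          · have htb : τ b = t := hpar.mp hta
            cases s <;>
              simp only [x1Vote, x2Vote, tripLt, x2Key, hta, htb, ha, hb, Fin.lt_def] <;>
              simp <;> omega
          · have htb : τ b ≠ t := fun h => hta (hpar.mpr h)
            cases s <;>
              simp only [x1Vote, x2Vote, tripLt, x2Key, hta, htb, ha, hb, Fin.lt_def] <;>
              simp <;> omega
        · have htb : τ b ≠ t := hnot t b hb
          by_cases hta : τ a = t <;>
            cases s <;>
            simp only [x1Vote, x2Vote, tripLt, x2Key, hta, htb, ha, hb, Fin.lt_def] <;>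
            simp <;> omega
        · have hta : τ a ≠ t := hnot t a ha
          by_cases htb : τ b = t <;>
            cases s <;>
            simp only [x1Vote, x2Vote, tripLt, x2Key, hta, htb, ha, hb, Fin.lt_def] <;>
            simp <;> omega
        · have hta : τ a ≠ t := hnot t a ha
          have htb : τ b ≠ t := hnot t b hb
          cases s <;>
            simp only [x1Vote, x2Vote, tripLt, x2Key, hta, htb, ha, hb, Fin.lt_def] <;>
            simp <;> omega
end
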